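/- For all x, y ∈ [0,1], ν(x·y) ≤ x·ν(y) + y·ν(x), where ν(x) = Σ_{d≥1} d·ε_d(x)·2^{-d}; i.e., ν is a subderivation with respect to multiplication. -/
import Mathlib

noncomputable def epsBit (d : ℕ) (x : ℝ) : ℝ := ((⌊2 ^ d * x⌋ % 2 : ℤ) : ℝ)

noncomputable def nu (x : ℝ) : ℝ := ∑' d : ℕ, (d : ℝ) * epsBit d x / 2 ^ d

lemma epsBit_nonneg (d : ℕ) (x : ℝ) : 0 ≤ epsBit d x := by
  unfold epsBit
  have := Int.emod_two_eq (⌊2 ^ d * x⌋)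
  rcases this with h | h <;> rw [h] <;> norm_num

lemma epsBit_le_one (d : ℕ) (x : ℝ) : epsBit d x ≤ 1 := by
  unfold epsBit
  have := Int.emod_two_eq (⌊2 ^ d * x⌋)
  rcases this with h | h <;> rw [h] <;> norm_num

lemma epsBit_succ (d : ℕ) (x : ℝ) :
    epsBit (d + 1) x = (⌊2 ^ (d + 1) * x⌋ : ℝ) - 2 * (⌊2 ^ d * x⌋ : ℝ) := by
  set u : ℝ := 2 ^ d * x with hu
  have h2u : (2 : ℝ) ^ (d + 1) * x = 2 * u := by rw [hu]; ring
  have h1 : (2 : ℤ) * ⌊u⌋ ≤ ⌊2 * u⌋ := by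
    apply Int.le_floor.mpr
    push_cast
    have := Int.floor_le u
    linarith
  have h2 : ⌊2 * u⌋ < 2 * ⌊u⌋ + 2 := by
    apply Int.floor_lt.mpr
    push_cast
    have := Int.lt_floor_add_one u
    linarith
  have key : ⌊2 * u⌋ % 2 = ⌊2 * u⌋ - 2 * ⌊u⌋ := by omega
  unfold epsBit
  rw [h2u, key]
  push_cast
  ring

lemma fract_step (d : ℕ) (x : ℝ) :
    Int.fract (2 ^ d * x) / 2 ^ d =
      Int.fract (2 ^ (d + 1) * x) / 2 ^ (d + 1) + epsBit (d + 1) x / 2 ^ (d + 1) := by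
  rw [epsBit_succ]
  have hpd : (2 : ℝ) ^ d ≠ 0 := by positivity
  have hpd1 : (2 : ℝ) ^ (d + 1) ≠ 0 := by positivity
  field_simp
  unfold Int.fract
  ring

lemma summable_nu_terms (x : ℝ) : Summable (fun d : ℕ => (d : ℝ) * epsBit d x / 2 ^ d) := by
  have hg : Summable (fun d : ℕ => (d : ℝ) * (1 / 2) ^ d) := by
    simpa using summable_pow_mul_geometric_of_norm_lt_one 1 (r := (1 / 2 : ℝ)) (by norm_num)
  apply Summable.of_nonneg_of_le _ _ hg
  · intro d
    have := epsBit_nonneg d x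
    positivity
  · intro d
    have h1 : (d : ℝ) * epsBit d x / 2 ^ d ≤ (d : ℝ) * 1 / 2 ^ d := by
      gcongr
      · exact epsBit_le_one d x
    calc (d : ℝ) * epsBit d x / 2 ^ d ≤ (d : ℝ) * 1 / 2 ^ d := h1
    _ = (d : ℝ) * (1 / 2) ^ d := by rw [div_pow, one_pow]; ring

lemma summable_F (x : ℝ) : Summable (fun d : ℕ => Int.fract (2 ^ d * x) / 2 ^ d) := by
  have hg : Summable (fun d : ℕ => (1 / 2 : ℝ) ^ d) :=
    summable_geometric_of_lt_one (by norm_num) (by norm_num)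
  apply Summable.of_nonneg_of_le _ _ hg
  · intro d
    have := Int.fract_nonneg (2 ^ d * x)
    positivity
  · intro d
    rw [div_pow, one_pow]
    gcongr
    exact (Int.fract_lt_one _).le

lemma tendsto_pow_aux : Filter.Tendsto (fun N : ℕ => (N : ℝ) * (1 / 2) ^ N)
    Filter.atTop (nhds 0) := by
  have hg : Summable (fun d : ℕ => (d : ℝ) * (1 / 2) ^ d) := by
    simpa using summable_pow_mul_geometric_of_norm_lt_one 1 (r := (1 / 2 : ℝ)) (by norm_num)
  exact hg.tendsto_atTop_zero

lemma tendsto_NgN (x : ℝ) :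
    Filter.Tendsto (fun N : ℕ => (N : ℝ) * (Int.fract (2 ^ N * x) / 2 ^ N))
      Filter.atTop (nhds 0) := by
  apply squeeze_zero
    (fun N => mul_nonneg (Nat.cast_nonneg N) (div_nonneg (Int.fract_nonneg _) (by positivity)))
    _ tendsto_pow_aux
  intro N
  rw [div_pow, one_pow]
  gcongr
  exact (Int.fract_lt_one _).le

lemma partial_F (x : ℝ) (N : ℕ) :
    ∑ d ∈ Finset.range N, Int.fract (2 ^ d * x) / 2 ^ d =
      (N : ℝ) * (Int.fract (2 ^ N * x) / 2 ^ N) +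
        ∑ k ∈ Finset.range (N + 1), (k : ℝ) * epsBit k x / 2 ^ k := by
  induction N with
  | zero => simp
  | succ n ih =>
      rw [Finset.sum_range_succ, ih, Finset.sum_range_succ (n := n + 1)]
      rw [fract_step n x]
      push_cast
      ring

lemma nu_eq_F (x : ℝ) : nu x = ∑' d : ℕ, Int.fract (2 ^ d * x) / 2 ^ d := by
  have hF := (summable_F x).hasSum.tendsto_sum_nat
  have hnu := (summable_nu_terms x).hasSum.tendsto_sum_nat
  have hnu' : Filter.Tendsto
      (fun N : ℕ => ∑ k ∈ Finset.range (N + 1), (k : ℝ) * epsBit k x / 2 ^ k)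
      Filter.atTop (nhds (nu x)) := hnu.comp (Filter.tendsto_add_atTop_nat 1)
  have h2 : Filter.Tendsto (fun N : ℕ => ∑ d ∈ Finset.range N, Int.fract (2 ^ d * x) / 2 ^ d)
      Filter.atTop (nhds (nu x)) := by
    have := (tendsto_NgN x).add hnu'
    rw [zero_add] at this
    exact this.congr (fun N => (partial_F x N).symm)
  exact tendsto_nhds_unique h2 hF

lemma hasSum_eps_fract (x : ℝ) :
    HasSum (fun j : ℕ => epsBit (j + 1) x / 2 ^ (j + 1)) (Int.fract x) := by
  have hsum : Summable (fun j : ℕ => epsBit (j + 1) x / 2 ^ (j + 1)) := by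
    have hg : Summable (fun j : ℕ => (1 / 2 : ℝ) ^ (j + 1)) := by
      apply Summable.comp_injective (i := fun j : ℕ => j + 1)
        (summable_geometric_of_lt_one (by norm_num) (by norm_num))
      exact add_left_injective 1
    apply Summable.of_nonneg_of_le _ _ hg
    · intro j; have := epsBit_nonneg (j + 1) x; positivity
    · intro j
      rw [div_pow, one_pow]
      gcongr
      exact epsBit_le_one _ _
  have hpart : ∀ N : ℕ, ∑ j ∈ Finset.range N, epsBit (j + 1) x / 2 ^ (j + 1) =
      Int.fract x - Int.fract (2 ^ N * x) / 2 ^ N := by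
    intro N
    have := Finset.sum_range_sub' (fun d : ℕ => Int.fract (2 ^ d * x) / 2 ^ d) N
    simp only [pow_zero, one_mul, div_one] at this
    rw [← this]
    apply Finset.sum_congr rfl
    intro j _
    rw [fract_step j x]
    ring
  have h2 : Filter.Tendsto (fun N : ℕ => ∑ j ∈ Finset.range N, epsBit (j + 1) x / 2 ^ (j + 1))
      Filter.atTop (nhds (Int.fract x)) := by
    have hz : Filter.Tendsto (fun N : ℕ => Int.fract (2 ^ N * x) / 2 ^ N)
        Filter.atTop (nhds 0) := by
      apply squeeze_zero (fun N => div_nonneg (Int.fract_nonneg _) (by positivity)) _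
        (tendsto_pow_atTop_nhds_zero_of_lt_one (by norm_num : (0:ℝ) ≤ 1/2) (by norm_num))
      intro N
      rw [div_pow, one_pow]
      gcongr
      exact (Int.fract_lt_one _).le
    have := (tendsto_const_nhds (x := Int.fract x) (f := Filter.atTop (α := ℕ))).sub hz
    rw [sub_zero] at this
    exact this.congr (fun N => (hpart N).symm)
  have := hsum.hasSum.tendsto_sum_nat
  exact (tendsto_nhds_unique h2 this) ▸ hsum.hasSum

lemma hasSum_eps {x : ℝ} (hx : x ∈ Set.Icc (0 : ℝ) 1) :
    HasSum (fun k : ℕ => epsBit k x / 2 ^ k) x := by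
  have h := hasSum_eps_fract x
  have h2 : HasSum (fun k : ℕ => epsBit k x / 2 ^ k)
      (Int.fract x + ∑ i ∈ Finset.range 1, epsBit i x / 2 ^ i) :=
    (hasSum_nat_add_iff 1).mp h
  have h3 : Int.fract x + ∑ i ∈ Finset.range 1, epsBit i x / 2 ^ i = x := by
    simp only [Finset.sum_range_one, pow_zero, div_one]
    rcases eq_or_lt_of_le hx.2 with h1 | h1
    · subst h1
      have he : epsBit 0 1 = 1 := by unfold epsBit; norm_num
      rw [he, Int.fract_one]
      norm_num
    · have hfl : ⌊x⌋ = 0 := Int.floor_eq_zero_iff.mpr ⟨hx.1, h1⟩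
      have he : epsBit 0 x = 0 := by
        unfold epsBit
        norm_num [hfl]
      rw [he]
      unfold Int.fract
      rw [hfl]
      norm_num
  rwa [h3] at h2

lemma nu_zero : nu 0 = 0 := by
  unfold nu
  have : ∀ d : ℕ, (d : ℝ) * epsBit d 0 / 2 ^ d = 0 := by
    intro d
    unfold epsBit
    norm_num
  simp [this]

lemma nu_nonneg (x : ℝ) : 0 ≤ nu x := by
  apply tsum_nonneg
  intro d
  have := epsBit_nonneg d x
  positivity

lemma epsBit_div_pow_lt {y : ℝ} (hy : y ∈ Set.Icc (0 : ℝ) 1) {d k : ℕ} (hdk : d < k) :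
    epsBit d (y / 2 ^ k) = 0 := by
  unfold epsBit
  have h0 : (0:ℝ) ≤ 2 ^ d * (y / 2 ^ k) :=
    mul_nonneg (by positivity) (div_nonneg hy.1 (by positivity))
  have hlt : 2 ^ d * (y / 2 ^ k) < 1 := by
    have h1 : 2 ^ d * (y / 2 ^ k) ≤ 2 ^ d * (1 / 2 ^ k) := by
      gcongr
      exact hy.2
    have hdd : (2:ℝ) ^ d < 2 ^ k := by
      gcongr
      norm_num
    have h2 : (2:ℝ) ^ d * (1 / 2 ^ k) < 1 := by
      rw [mul_one_div, div_lt_one (by positivity)]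
      exact hdd
    linarith
  have : ⌊2 ^ d * (y / 2 ^ k)⌋ = 0 := Int.floor_eq_zero_iff.mpr ⟨h0, hlt⟩
  rw [this]
  norm_num

lemma epsBit_div_pow_ge (y : ℝ) (m k : ℕ) :
    epsBit (m + k) (y / 2 ^ k) = epsBit m y := by
  unfold epsBit
  congr 3
  rw [pow_add]
  field_simp

lemma nu_div_pow {y : ℝ} (hy : y ∈ Set.Icc (0 : ℝ) 1) (k : ℕ) :
    nu (y / 2 ^ k) = (k : ℝ) * y / 2 ^ k + nu y / 2 ^ k := by
  have h1 : Summable (fun m : ℕ => (m : ℝ) * epsBit m y / 2 ^ m / 2 ^ k) :=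
    (summable_nu_terms y).div_const _
  have h2 : Summable (fun m : ℕ => (k : ℝ) * (epsBit m y / 2 ^ m) / 2 ^ k) :=
    (((hasSum_eps hy).summable.mul_left _).div_const _)
  have hinj : Function.Injective (fun m : ℕ => m + k) := add_left_injective k
  have hsupp : (Function.support fun d : ℕ => (d : ℝ) * epsBit d (y / 2 ^ k) / 2 ^ d)
      ⊆ Set.range (fun m : ℕ => m + k) := by
    intro d hd
    by_contra hr
    have hdk : d < k := by
      by_contra h
      push_neg at h
      exact hr ⟨d - k, by simp; omega⟩
    apply hd
    show (d : ℝ) * epsBit d (y / 2 ^ k) / 2 ^ d = 0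
    rw [epsBit_div_pow_lt hy hdk]
    ring
  calc nu (y / 2 ^ k)
      = ∑' m : ℕ, ((m + k : ℕ) : ℝ) * epsBit (m + k) (y / 2 ^ k) / 2 ^ (m + k) :=
        (hinj.tsum_eq hsupp).symm
    _ = ∑' m : ℕ, ((m : ℝ) * epsBit m y / 2 ^ m / 2 ^ k
          + (k : ℝ) * (epsBit m y / 2 ^ m) / 2 ^ k) := by
        apply tsum_congr
        intro m
        rw [epsBit_div_pow_ge, pow_add]
        push_cast
        field_simp
    _ = (∑' m : ℕ, (m : ℝ) * epsBit m y / 2 ^ m / 2 ^ k)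
          + ∑' m : ℕ, (k : ℝ) * (epsBit m y / 2 ^ m) / 2 ^ k := Summable.tsum_add h1 h2
    _ = (k : ℝ) * y / 2 ^ k + nu y / 2 ^ k := by
        rw [tsum_div_const, tsum_div_const, tsum_mul_left, (hasSum_eps hy).tsum_eq]
        rw [add_comm]
        rfl

lemma epsBit_eq_zero_or_one (d : ℕ) (x : ℝ) : epsBit d x = 0 ∨ epsBit d x = 1 := by
  unfold epsBit
  rcases Int.emod_two_eq ⌊2 ^ d * x⌋ with h | h
  · left; rw [h]; norm_num
  · right; rw [h]; norm_num

lemma fract_finset_le (b : ℕ → ℝ) (n : ℕ) :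
    Int.fract (∑ k ∈ Finset.range n, b k) ≤ ∑ k ∈ Finset.range n, Int.fract (b k) := by
  induction n with
  | zero => simp
  | succ m ih =>
      rw [Finset.sum_range_succ, Finset.sum_range_succ]
      exact (Int.fract_add_le _ _).trans (by linarith)

lemma fract_le_self_of_nonneg {u : ℝ} (hu : 0 ≤ u) : Int.fract u ≤ u := by
  have h1 : (0:ℤ) ≤ ⌊u⌋ := Int.floor_nonneg.mpr hu
  have h2 : (0:ℝ) ≤ (⌊u⌋ : ℝ) := by exact_mod_cast h1
  unfold Int.fract
  linarith

lemma fract_tsum_le (b : ℕ → ℝ) (hb0 : ∀ k, 0 ≤ b k) (hb : Summable b) :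
    Int.fract (∑' k, b k) ≤ ∑' k, Int.fract (b k) := by
  have hfb : Summable (fun k => Int.fract (b k)) :=
    hb.of_nonneg_of_le (fun k => Int.fract_nonneg _) (fun k => fract_le_self_of_nonneg (hb0 k))
  have hpart : ∀ n, Int.fract (∑ k ∈ Finset.range n, b k) ≤ ∑' k, Int.fract (b k) := fun n =>
    (fract_finset_le b n).trans (Summable.sum_le_tsum _ (fun k _ => Int.fract_nonneg _) hfb)
  by_cases hint : (∑' k, b k) = ⌊(∑' k, b k)⌋
  · have h0 : Int.fract (∑' k, b k) = 0 := by
      rw [hint]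
      exact Int.fract_intCast _
    rw [h0]
    exact tsum_nonneg (fun k => Int.fract_nonneg _)
  · have hc : ContinuousAt Int.fract (∑' k, b k) := continuousAt_fract hint
    have ht : Filter.Tendsto (fun n => ∑ k ∈ Finset.range n, b k) Filter.atTop
        (nhds (∑' k, b k)) := hb.hasSum.tendsto_sum_nat
    exact le_of_tendsto (hc.tendsto.comp ht) (Filter.Eventually.of_forall hpart)

theorem nu_subderivation :
    ∀ x ∈ Set.Icc (0 : ℝ) 1, ∀ y ∈ Set.Icc (0 : ℝ) 1,
      nu (x * y) ≤ x * nu y + y * nu x := by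
  intro x hx y hy
  set a : ℕ → ℝ := fun k => epsBit k x * y / 2 ^ k with ha
  have ha0 : ∀ k, 0 ≤ a k := fun k =>
    div_nonneg (mul_nonneg (epsBit_nonneg k x) hy.1) (by positivity)
  have hax : HasSum a (x * y) := by
    have h := (hasSum_eps hx).mul_right y
    have he : (fun k => epsBit k x / 2 ^ k * y) = a := by
      funext k
      rw [ha]
      ring
    rwa [he] at h
  have hnua : ∀ k : ℕ, nu (a k) =
      y * ((k : ℝ) * epsBit k x / 2 ^ k) + nu y * (epsBit k x / 2 ^ k) := by
    intro k
    rcases epsBit_eq_zero_or_one k x with h | h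
    · have : a k = 0 := by rw [ha]; simp [h]
      rw [this, nu_zero, h]
      ring
    · have hak : a k = y / 2 ^ k := by rw [ha]; simp [h]
      rw [hak, nu_div_pow hy k, h]
      ring
  have S1 : Summable (fun k : ℕ => y * ((k : ℝ) * epsBit k x / 2 ^ k)) :=
    (summable_nu_terms x).mul_left y
  have S2 : Summable (fun k : ℕ => nu y * (epsBit k x / 2 ^ k)) :=
    (hasSum_eps hx).summable.mul_left (nu y)
  have hnua_sum : Summable (fun k => nu (a k)) := by
    apply Summable.congr (S1.add S2)
    intro k
    rw [hnua k]
  have htsum_nua : ∑' k, nu (a k) = y * nu x + nu y * x := by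
    calc ∑' k, nu (a k)
        = ∑' k : ℕ, (y * ((k : ℝ) * epsBit k x / 2 ^ k) + nu y * (epsBit k x / 2 ^ k)) :=
          tsum_congr hnua
      _ = (∑' k : ℕ, y * ((k : ℝ) * epsBit k x / 2 ^ k)) + ∑' k : ℕ, nu y * (epsBit k x / 2 ^ k) :=
          Summable.tsum_add S1 S2
      _ = y * nu x + nu y * x := by
          rw [tsum_mul_left, tsum_mul_left, (hasSum_eps hx).tsum_eq]
          rfl
  -- the doubly-indexed family
  set f : ℕ × ℕ → ℝ := fun p => Int.fract (2 ^ p.2 * a p.1) / 2 ^ p.2 with hf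
  have hf0 : 0 ≤ f := by
    intro p
    exact div_nonneg (Int.fract_nonneg _) (by positivity)
  have hslice : ∀ k, Summable (fun d => f (k, d)) := fun k => summable_F (a k)
  have hFk : ∀ k, ∑' d, f (k, d) = nu (a k) := fun k => (nu_eq_F (a k)).symm
  have hprod : Summable f := by
    rw [summable_prod_of_nonneg hf0]
    refine ⟨hslice, ?_⟩
    apply Summable.congr hnua_sum
    intro k
    exact (hFk k).symm
  have hswap : Summable (fun q : ℕ × ℕ => f (q.2, q.1)) := by
    have := (Equiv.prodComm ℕ ℕ).summable_iff (f := f)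
    rw [← this] at hprod
    exact hprod
  have hswap0 : 0 ≤ (fun q : ℕ × ℕ => f (q.2, q.1)) := fun q => hf0 (q.2, q.1)
  obtain ⟨hslice2, hsums2⟩ := (summable_prod_of_nonneg hswap0).mp hswap
  -- main chain
  have key : ∀ d : ℕ, Int.fract (2 ^ d * (x * y)) / 2 ^ d ≤ ∑' k, f (k, d) := by
    intro d
    have hb : Summable (fun k => 2 ^ d * a k) := hax.summable.mul_left _
    have hb0 : ∀ k, 0 ≤ 2 ^ d * a k := fun k => mul_nonneg (by positivity) (ha0 k)
    have hsb : (∑' k, 2 ^ d * a k) = 2 ^ d * (x * y) := (hax.mul_left _).tsum_eq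
    have h1 := fract_tsum_le _ hb0 hb
    rw [hsb] at h1
    have h2 : ∑' k, f (k, d) = (∑' k, Int.fract (2 ^ d * a k)) / 2 ^ d := by
      rw [← tsum_div_const]
    rw [h2]
    gcongr
  calc nu (x * y) = ∑' d, Int.fract (2 ^ d * (x * y)) / 2 ^ d := nu_eq_F _
    _ ≤ ∑' d, ∑' k, f (k, d) := Summable.tsum_le_tsum key (summable_F _) hsums2
    _ = ∑' q : ℕ × ℕ, f (q.2, q.1) := (Summable.tsum_prod hswap).symm
    _ = ∑' p : ℕ × ℕ, f p := (Equiv.prodComm ℕ ℕ).tsum_eq f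
    _ = ∑' k, ∑' d, f (k, d) := Summable.tsum_prod hprod
    _ = ∑' k, nu (a k) := tsum_congr hFk
    _ = y * nu x + nu y * x := htsum_nua
    _ = x * nu y + y * nu x := by ring
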